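/- arXiv:2511.18476 — 2 statements merged into one kernel-verified Lean document; each statement's English description precedes it below -/
import Mathlib

section
/- If μ has an RRM representation with constraint function Q and salience parameters s, then the revealed constraint function coincides with Q: for all x ∈ X, Q^R(x) = Q(x), where Q^R(x) = {x} ∪ {y ≠ x : μ({x},{x,y}) = 0}. -/
open Finset

variable {X : Type*} [Fintype X] [DecidableEq X]

def IsRRM (μ : Finset X → Finset X → ℝ) (s : X → ℝ) (Q : X → Finset X) : Prop :=
  (∀ x, 0 < s x) ∧ (∀ x, x ∈ Q x) ∧ Function.Injective Q ∧
  ∀ T S : Finset X, T.Nonempty → T ⊆ S →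
    μ T S = ∑ x ∈ S, (s x / ∑ y ∈ S, s y) * (if T = Q x ∩ S then 1 else 0)

open scoped Classical in
/-- The revealed constraint function: `QR μ x = {x} ∪ {y ≠ x : μ({x},{x,y}) = 0}`. -/
noncomputable def QR (μ : Finset X → Finset X → ℝ) (x : X) : Finset X :=
  insert x (Finset.univ.filter (fun y => y ≠ x ∧ μ {x} {x, y} = 0))

/-!
In a binary menu `{x, y}`, the singleton `{x}` is revealed exactly when the drawn constraint
set cuts `y` away. Drawing `y` never does, since `y ∈ Q y`; drawing `x` (probability
`s x / (s x + s y) > 0`) does exactly when `y ∉ Q x`. Hence `μ({x},{x,y}) = 0 ↔ y ∈ Q x`.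
-/

namespace Finset

variable {α : Type*} [DecidableEq α]

theorem singleton_eq_inter_pair_iff {A : Finset α} {x y : α} (hx : x ∈ A) (hxy : x ≠ y) :
    {x} = A ∩ {x, y} ↔ y ∉ A := by
  constructor
  · intro h hy
    have : y ∈ ({x} : Finset α) :=
      h ▸ mem_inter.2 ⟨hy, mem_insert_of_mem (mem_singleton_self y)⟩
    exact hxy (mem_singleton.1 this).symm
  · intro hy
    ext z
    simp only [mem_singleton, mem_inter, mem_insert]
    constructor
    · rintro rfl
      exact ⟨hx, Or.inl rfl⟩
    · rintro ⟨hz, rfl | rfl⟩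
      · rfl
      · exact absurd hz hy

end Finset

namespace IsRRM

variable {α : Type*} [DecidableEq α] {μ : Finset α → Finset α → ℝ} {s : α → ℝ}
  {Q : α → Finset α}

theorem mu_singleton_pair (h : IsRRM μ s Q) {x y : α} (hxy : x ≠ y) :
    μ {x} {x, y} = s x / (s x + s y) * if y ∈ Q x then 0 else 1 := by
  obtain ⟨-, hmem, -, hrep⟩ := h
  have hx : ({x} : Finset α) = Q x ∩ {x, y} ↔ y ∉ Q x :=
    singleton_eq_inter_pair_iff (hmem x) hxy
  have hy : ({x} : Finset α) ≠ Q y ∩ {x, y} := fun h => hxy <| Eq.symm <| mem_singleton.1 <|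
    h ▸ mem_inter.2 ⟨hmem y, mem_insert_of_mem (mem_singleton_self y)⟩
  have hsub : ({x} : Finset α) ⊆ {x, y} := singleton_subset_iff.2 (mem_insert_self x {y})
  rw [hrep {x} {x, y} (singleton_nonempty x) hsub, sum_pair hxy, sum_pair hxy, if_neg hy,
    mul_zero, add_zero]
  by_cases hyQ : y ∈ Q x
  · rw [if_neg (hx.not.2 (not_not.2 hyQ)), if_pos hyQ]
  · rw [if_pos (hx.2 hyQ), if_neg hyQ]

theorem mu_singleton_pair_eq_zero_iff (h : IsRRM μ s Q) {x y : α} (hxy : x ≠ y) :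
    μ {x} {x, y} = 0 ↔ y ∈ Q x := by
  have hpos : 0 < s x / (s x + s y) := div_pos (h.1 x) (add_pos (h.1 x) (h.1 y))
  rw [h.mu_singleton_pair hxy]
  split_ifs with hyQ
  · simp only [mul_zero, hyQ]
  · simp only [mul_one, hpos.ne', hyQ]

end IsRRM

theorem revealed_constraint_eq (μ : Finset X → Finset X → ℝ)
    (s : X → ℝ) (Q : X → Finset X) (h : IsRRM μ s Q) :
    ∀ x : X, QR μ x = Q x := by
  intro x
  ext y
  simp only [QR, mem_insert, mem_filter, mem_univ, true_and]
  by_cases hyx : y = x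
  · subst hyx
    simp only [true_or, h.2.1 y]
  · rw [h.mu_singleton_pair_eq_zero_iff (Ne.symm hyx)]
    simp only [hyx, false_or, ne_eq, not_false_eq_true, true_and]
end

section
/- A stochastic choice correspondence μ has a nest-invariant NSC representation (an NSC representation whose weighting function is constant on nonempty subsets of each nest) if and only if μ has both an NSC representation and an RCG representation. -/
open Finset

variable {X : Type*} [Fintype X] [DecidableEq X]

def IsSCC (μ : Finset X → Finset X → ℝ) : Prop :=
  (∀ T S : Finset X, T ⊆ S → 0 ≤ μ T S ∧ μ T S ≤ 1) ∧
  (∀ S : Finset X, S.Nonempty →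
      ∑ T ∈ S.powerset.filter (fun T => T.Nonempty), μ T S = 1) ∧
  (∀ T S : Finset X, ¬ T ⊆ S → μ T S = 0)

def IsNSC (μ : Finset X → Finset X → ℝ) (q : ℕ) (N : Fin q → Finset X)
    (σ : Finset X → ℝ) : Prop :=
  (∀ i, (N i).Nonempty) ∧ (∀ i j, i ≠ j → Disjoint (N i) (N j)) ∧
  ((Finset.univ : Finset (Fin q)).biUnion N = (Finset.univ : Finset X)) ∧
  σ ∅ = 0 ∧ (∀ T : Finset X, T.Nonempty → 0 < σ T) ∧
  ∀ T S : Finset X, T.Nonempty → T ⊆ S →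
    μ T S = ∑ i, (σ (N i ∩ S) / ∑ j, σ (N j ∩ S)) * (if T = N i ∩ S then 1 else 0)

def NSCRep (μ : Finset X → Finset X → ℝ) : Prop := ∃ q N σ, IsNSC μ q N σ

/-- A nest-invariant NSC representation: the weighting function is constant on
nonempty subsets of each nest. -/
def NestInvRep (μ : Finset X → Finset X → ℝ) : Prop :=
  ∃ (q : ℕ) (N : Fin q → Finset X) (σ : Finset X → ℝ), IsNSC μ q N σ ∧
    ∀ (i : Fin q) (T T' : Finset X), T.Nonempty → T'.Nonempty →
      T ⊆ N i → T' ⊆ N i → σ T = σ T'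

noncomputable def rcgVal (m : Finset X → ℝ) (T S : Finset X) : ℝ :=
  (∑ C : Finset X, if T = C ∩ S then m C else 0) /
    ∑ C ∈ Finset.univ.filter (fun C : Finset X => (C ∩ S).Nonempty), m C

def RCGRep (μ : Finset X → Finset X → ℝ) : Prop :=
  ∃ m : Finset X → ℝ,
    (∀ C, 0 ≤ m C) ∧ m ∅ = 0 ∧ (∑ C : Finset X, m C = 1) ∧
    (∀ x : X, ∃ C : Finset X, x ∈ C ∧ 0 < m C) ∧
    ∀ T S : Finset X, T.Nonempty → T ⊆ S → μ T S = rcgVal m T S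

/-!
The two representations meet in random choice over a partition into nests. If `σ` is constant
on each nest, drawing the nest `N i` with probability proportional to `σ (N i)` and choosing
`N i ∩ S` from `S` is exactly the NSC rule, so the nests with these masses form an RCG
representation. Conversely, at `S = X` an RCG mass `m` reproduces `μ (·, X)`, which an NSC
representation supports on the nests; so `m` lives on the nests, and the weighting
`T ↦ m {C | C ∩ T ≠ ∅}` is nest-invariant and represents `μ` as an NSC.
-/

noncomputable def nscVal {q : ℕ} (N : Fin q → Finset X) (σ : Finset X → ℝ)
    (T S : Finset X) : ℝ :=
  ∑ i, (σ (N i ∩ S) / ∑ j, σ (N j ∩ S)) * (if T = N i ∩ S then 1 else 0)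

def hitMass (m : Finset X → ℝ) (S : Finset X) : ℝ :=
  ∑ C ∈ univ.filter (fun C : Finset X => (C ∩ S).Nonempty), m C

section RCG

variable {m : Finset X → ℝ}

lemma rcgVal_eq_div_hitMass (m : Finset X → ℝ) (T S : Finset X) :
    rcgVal m T S = (∑ C : Finset X, if T = C ∩ S then m C else 0) / hitMass m S :=
  rfl

@[simp]
lemma hitMass_empty (m : Finset X → ℝ) : hitMass m ∅ = 0 := by
  simp [hitMass]

lemma hitMass_pos (hm : ∀ C, 0 ≤ m C) (hcov : ∀ x : X, ∃ C, x ∈ C ∧ 0 < m C)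
    {T : Finset X} (hT : T.Nonempty) : 0 < hitMass m T := by
  obtain ⟨x, hx⟩ := hT
  obtain ⟨C, hxC, hC⟩ := hcov x
  have hCT : C ∈ univ.filter (fun C : Finset X => (C ∩ T).Nonempty) :=
    mem_filter.2 ⟨mem_univ C, x, mem_inter.2 ⟨hxC, hx⟩⟩
  exact sum_pos' (fun C _ => hm C) ⟨C, hCT, hC⟩

lemma rcgVal_univ (hm : m ∅ = 0) (hsum : ∑ C, m C = 1) (T : Finset X) :
    rcgVal m T univ = m T := by
  have hhit : hitMass m univ = 1 := by
    rw [hitMass, sum_filter_of_ne fun C _ hC => ?_, hsum]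
    rw [inter_univ, nonempty_iff_ne_empty]
    rintro rfl
    exact hC hm
  simp [rcgVal_eq_div_hitMass, hhit]

lemma rcgVal_div_const (m : Finset X → ℝ) {c : ℝ} (hc : c ≠ 0) (T S : Finset X) :
    rcgVal (fun C => m C / c) T S = rcgVal m T S := by
  have hite : ∀ C : Finset X,
      (if T = C ∩ S then m C / c else 0) = (if T = C ∩ S then m C else 0) / c := fun C => by
    split_ifs <;> simp
  simp only [rcgVal_eq_div_hitMass, hitMass, hite, ← sum_div]
  exact div_div_div_cancel_right₀ hc _ _

end RCG

section Nests

variable {q : ℕ} (N : Fin q → Finset X)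

def nestMass (w : Fin q → ℝ) (C : Finset X) : ℝ :=
  ∑ i, if C = N i then w i else 0

variable {N} {w : Fin q → ℝ}

lemma sum_ite_nestMass (w : Fin q → ℝ) (P : Finset X → Prop) [DecidablePred P] :
    (∑ C, if P C then nestMass N w C else 0) = ∑ i, if P (N i) then w i else 0 := by
  rw [← sum_filter]
  simp only [nestMass]
  rw [sum_comm]
  refine sum_congr rfl fun i _ => ?_
  simp [sum_ite_eq']

lemma sum_nestMass (w : Fin q → ℝ) : ∑ C, nestMass N w C = ∑ i, w i := by
  simpa using sum_ite_nestMass (N := N) w (fun _ => True)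

omit [Fintype X] in
lemma nestMass_nonneg (hw : ∀ i, 0 ≤ w i) (C : Finset X) : 0 ≤ nestMass N w C :=
  sum_nonneg fun i _ => by split_ifs <;> simp [hw]

omit [Fintype X] in
lemma nestMass_empty (hN : ∀ i, (N i).Nonempty) (w : Fin q → ℝ) : nestMass N w ∅ = 0 :=
  sum_eq_zero fun i _ => if_neg (hN i).ne_empty.symm

omit [Fintype X] in
lemma nestMass_apply_nest (hN : Function.Injective N) (w : Fin q → ℝ) (i : Fin q) :
    nestMass N w (N i) = w i := by
  simp [nestMass, hN.eq_iff]

omit [Fintype X] in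
lemma nestMass_eq_of_support {m : Finset X → ℝ} (hN : Function.Injective N)
    (hm : ∀ C, (∀ i, C ≠ N i) → m C = 0) : nestMass N (fun i => m (N i)) = m := by
  funext C
  by_cases hC : ∃ i, C = N i
  · obtain ⟨i, rfl⟩ := hC
    exact nestMass_apply_nest hN _ i
  · push Not at hC
    rw [hm C hC]
    exact sum_eq_zero fun i _ => if_neg (hC i)

lemma hitMass_nestMass (w : Fin q → ℝ) (S : Finset X) :
    hitMass (nestMass N w) S = ∑ i, if (N i ∩ S).Nonempty then w i else 0 := by
  rw [hitMass, sum_filter, sum_ite_nestMass]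

lemma hitMass_nestMass_of_subset (hN : ∀ i j, i ≠ j → Disjoint (N i) (N j))
    (w : Fin q → ℝ) {i : Fin q} {T : Finset X} (hT : T.Nonempty) (hTi : T ⊆ N i) :
    hitMass (nestMass N w) T = w i := by
  rw [hitMass_nestMass, sum_eq_single i, if_pos (by rwa [inter_eq_right.2 hTi])]
  · intro j _ hji
    refine if_neg fun ⟨x, hx⟩ => ?_
    rw [mem_inter] at hx
    exact disjoint_left.1 (hN j i hji) hx.1 (hTi hx.2)
  · simp

lemma rcgVal_nestMass (w : Fin q → ℝ) (T S : Finset X) :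
    rcgVal (nestMass N w) T S =
      (∑ i, if T = N i ∩ S then w i else 0) /
        ∑ i, if (N i ∩ S).Nonempty then w i else 0 := by
  rw [rcgVal_eq_div_hitMass, sum_ite_nestMass, hitMass_nestMass]

lemma nscVal_eq_rcgVal_nestMass {σ : Finset X → ℝ} (hσ0 : σ ∅ = 0)
    (hσ : ∀ i T, T.Nonempty → T ⊆ N i → σ T = w i) {T : Finset X} (hT : T.Nonempty)
    (S : Finset X) : nscVal N σ T S = rcgVal (nestMass N w) T S := by
  have hσS : ∀ j, σ (N j ∩ S) = if (N j ∩ S).Nonempty then w j else 0 := fun j => by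
    split_ifs with hj
    · exact hσ j _ hj inter_subset_left
    · rwa [not_nonempty_iff_eq_empty.1 hj]
  rw [rcgVal_nestMass, nscVal, sum_div]
  simp only [hσS]
  refine sum_congr rfl fun i _ => ?_
  by_cases hTi : T = N i ∩ S
  · rw [if_pos hTi, if_pos hTi, if_pos (hTi ▸ hT), mul_one]
  · simp [hTi]

end Nests

namespace IsNSC

variable {μ : Finset X → Finset X → ℝ} {q : ℕ} {N : Fin q → Finset X}
  {σ : Finset X → ℝ}

lemma apply (h : IsNSC μ q N σ) {T S : Finset X} (hT : T.Nonempty) (hTS : T ⊆ S) :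
    μ T S = nscVal N σ T S :=
  h.2.2.2.2.2 T S hT hTS

lemma injective (h : IsNSC μ q N σ) : Function.Injective N := by
  intro i j hij
  by_contra hne
  exact (h.1 i).ne_empty (disjoint_self.1 (hij ▸ h.2.1 i j hne))

lemma exists_mem (h : IsNSC μ q N σ) (x : X) : ∃ i, x ∈ N i := by
  have hx : x ∈ univ.biUnion N := h.2.2.1 ▸ mem_univ x
  simpa using hx

lemma apply_univ_of_ne_nest (h : IsNSC μ q N σ) {T : Finset X} (hT : T.Nonempty)
    (hTN : ∀ i, T ≠ N i) : μ T univ = 0 := by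
  simp [h.apply hT (subset_univ T), nscVal, hTN]

lemma rcgRep (h : IsNSC μ q N σ) [Nonempty X]
    (hinv : ∀ i T, T.Nonempty → T ⊆ N i → σ T = σ (N i)) : RCGRep μ := by
  obtain ⟨i₀, -⟩ := h.exists_mem (Classical.arbitrary X)
  have hσN : ∀ i, 0 < σ (N i) := fun i => h.2.2.2.2.1 _ (h.1 i)
  have hD : 0 < ∑ i, σ (N i) := sum_pos (fun i _ => hσN i) ⟨i₀, mem_univ i₀⟩
  refine ⟨fun C => nestMass N (fun i => σ (N i)) C / ∑ i, σ (N i),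
    fun C => div_nonneg (nestMass_nonneg (fun i => (hσN i).le) C) hD.le, ?_, ?_, ?_, ?_⟩
  · simp [nestMass_empty h.1]
  · rw [← sum_div, sum_nestMass, div_self hD.ne']
  · intro x
    obtain ⟨i, hx⟩ := h.exists_mem x
    exact ⟨N i, hx, by simpa [nestMass_apply_nest h.injective] using div_pos (hσN i) hD⟩
  · intro T S hT hTS
    rw [rcgVal_div_const _ hD.ne', h.apply hT hTS,
      nscVal_eq_rcgVal_nestMass h.2.2.2.1 hinv hT]

lemma nestInvRep_of_rcgRep (h : IsNSC μ q N σ) (hrcg : RCGRep μ) : NestInvRep μ := by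
  obtain ⟨m, hm, hm0, hsum, hcov, hrep⟩ := hrcg
  have hsupp : ∀ C, (∀ i, C ≠ N i) → m C = 0 := fun C hC => by
    rcases C.eq_empty_or_nonempty with rfl | hne
    · exact hm0
    · rw [← rcgVal_univ hm0 hsum C, ← hrep C univ hne (subset_univ C),
        h.apply_univ_of_ne_nest hne hC]
  have hmN := nestMass_eq_of_support h.injective hsupp
  have hinv : ∀ i T, T.Nonempty → T ⊆ N i → hitMass m T = m (N i) := fun i T hT hTi => by
    conv_lhs => rw [← hmN]
    exact hitMass_nestMass_of_subset h.2.1 _ hT hTi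
  refine ⟨q, N, hitMass m, ⟨h.1, h.2.1, h.2.2.1, hitMass_empty m,
    fun T hT => hitMass_pos hm hcov hT, fun T S hT hTS => ?_⟩,
    fun i T T' hT hT' hTi hT'i => (hinv i T hT hTi).trans (hinv i T' hT' hT'i).symm⟩
  rw [hrep T S hT hTS]
  conv_lhs => rw [← hmN]
  exact (nscVal_eq_rcgVal_nestMass (hitMass_empty m) hinv hT S).symm

end IsNSC

theorem nestInv_iff_nsc_and_rcg_general (μ : Finset X → Finset X → ℝ)
    (hcard : 3 ≤ Fintype.card X) :
    NestInvRep μ ↔ NSCRep μ ∧ RCGRep μ := by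
  have : Nonempty X := Fintype.card_pos_iff.1 (by omega)
  constructor
  · rintro ⟨q, N, σ, h, hinv⟩
    refine ⟨⟨q, N, σ, h⟩, h.rcgRep fun i T hT hTi => ?_⟩
    exact hinv i T (N i) hT (h.1 i) hTi subset_rfl
  · rintro ⟨⟨q, N, σ, h⟩, hrcg⟩
    exact h.nestInvRep_of_rcgRep hrcg

theorem nestInv_iff_nsc_and_rcg (μ : Finset X → Finset X → ℝ)
    (hcard : 3 ≤ Fintype.card X) (hμ : IsSCC μ) :
    NestInvRep μ ↔ NSCRep μ ∧ RCGRep μ :=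
  nestInv_iff_nsc_and_rcg_general μ hcard
end
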